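/- Let p > 1 be real and let c, β be real numbers. Suppose φ : ℝ → ℝ is a Schwartz function satisfying the solitary-wave equation φ''''(x) + βφ''(x) + (1−c²)φ(x) = |φ(x)|^{p−1}φ(x) for all x ∈ ℝ. Then (3p+5)∫_ℝ (φ''(x))² dx − (p+3)β∫_ℝ (φ'(x))² dx − (p−1)(1−c²)∫_ℝ φ(x)² dx = 0. -/

import Mathlib

open Filter Real

lemma habs {p : ℝ} (hp : 1 < p) (t : ℝ) :
    HasDerivAt (fun s : ℝ => |s| ^ (p+1)) ((p+1) * |t| ^ (p-1) * t) t := by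
  rcases lt_trichotomy t 0 with ht | rfl | ht
  · have hnt : (0:ℝ) < -t := by linarith
    have hev : (fun s : ℝ => (-s) ^ (p+1)) =ᶠ[nhds t] fun s : ℝ => |s| ^ (p+1) := by
      filter_upwards [eventually_lt_nhds ht] with s hs
      rw [abs_of_neg hs]
    have hd : HasDerivAt (fun s : ℝ => (-s) ^ (p+1)) ((p+1) * (-t) ^ p * (-1)) t := by
      have h1 : HasDerivAt (fun s : ℝ => s ^ (p+1)) ((p+1) * (-t) ^ (p+1-1)) (-t) :=
        Real.hasDerivAt_rpow_const (Or.inl hnt.ne')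
      simpa [add_sub_cancel_right, Function.comp_def] using h1.comp t (hasDerivAt_neg t)
    have := hd.congr_of_eventuallyEq hev.symm
    refine this.congr_deriv ?_
    rw [abs_of_neg ht,
      show p = (p-1) + 1 by ring, Real.rpow_add_one hnt.ne']
    ring
  · have key : HasDerivAt (fun s : ℝ => |s| ^ (p+1)) 0 0 := by
      rw [hasDerivAt_iff_tendsto_slope]
      apply squeeze_zero_norm (a := fun s : ℝ => |s| ^ p)
      · intro s
        rcases eq_or_ne s 0 with rfl | hs
        · simp only [slope_same, norm_zero]
          positivity
        · have h1 : slope (fun s : ℝ => |s| ^ (p+1)) 0 s = |s| ^ (p+1) / s := by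
            simp [slope, Real.zero_rpow (by positivity : p + 1 ≠ 0), div_eq_inv_mul]
          rw [h1, norm_div, Real.norm_eq_abs, Real.norm_eq_abs,
            abs_of_nonneg (Real.rpow_nonneg (abs_nonneg s) _),
            Real.rpow_add_one (abs_ne_zero.mpr hs),
            mul_div_assoc, div_self (abs_ne_zero.mpr hs), mul_one]
      · have h2 : ContinuousAt (fun y : ℝ => y ^ p) 0 :=
          Real.continuousAt_rpow_const 0 p (Or.inr (by linarith))
        have h3 : Filter.Tendsto (fun s : ℝ => |s|) (nhds 0) (nhds 0) := by
          simpa using (continuous_abs.tendsto (0:ℝ))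
        have h1 := (h2.tendsto.comp h3).mono_left (nhdsWithin_le_nhds (s := {(0:ℝ)}ᶜ))
        simpa [Real.zero_rpow (by positivity : p ≠ 0), Function.comp_def] using h1
    simpa using key
  · have hev : (fun s : ℝ => s ^ (p+1)) =ᶠ[nhds t] fun s : ℝ => |s| ^ (p+1) := by
      filter_upwards [eventually_gt_nhds ht] with s hs
      rw [abs_of_pos hs]
    have hd : HasDerivAt (fun s : ℝ => s ^ (p+1)) ((p+1) * t ^ (p+1-1)) t :=
      Real.hasDerivAt_rpow_const (Or.inl ht.ne')
    have := hd.congr_of_eventuallyEq hev.symm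
    refine this.congr_deriv ?_
    rw [abs_of_pos ht, add_sub_cancel_right,
      show p = (p-1) + 1 by ring, Real.rpow_add_one ht.ne']
    ring

lemma habs_eq {p : ℝ} (hp : 1 < p) (t : ℝ) : |t| ^ (p+1) = |t| ^ (p-1) * t * t := by
  rcases eq_or_ne t 0 with rfl | ht
  · simp [Real.zero_rpow (by positivity : p + 1 ≠ 0)]
  · rw [show p + 1 = (p-1) + 2 by ring, Real.rpow_add (abs_pos.mpr ht),
      show (2:ℝ) = ((2:ℕ):ℝ) by norm_num, Real.rpow_natCast, sq_abs]
    ring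

open MeasureTheory

noncomputable def mulxCLM : SchwartzMap ℝ ℝ →L[ℝ] SchwartzMap ℝ ℝ :=
  SchwartzMap.bilinLeftCLM (ContinuousLinearMap.mul ℝ ℝ)
    (ContinuousLinearMap.hasTemperateGrowth (ContinuousLinearMap.id ℝ ℝ))

lemma schwartz_tendsto_zero (ψ : SchwartzMap ℝ ℝ) (l : Filter ℝ)
    (hl : l ≤ Filter.cocompact ℝ) : Filter.Tendsto ⇑ψ l (nhds 0) :=
  (zero_at_infty ψ).mono_left hl

lemma schwartz_x_tendsto_zero (ψ : SchwartzMap ℝ ℝ) (l : Filter ℝ)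
    (hl : l ≤ Filter.cocompact ℝ) :
    Filter.Tendsto (fun x => x * ψ x) l (nhds 0) := by
  have h := schwartz_tendsto_zero (mulxCLM ψ) l hl
  have : ⇑(mulxCLM ψ) = fun x => ψ x * x := rfl
  rw [this] at h
  simpa [mul_comm] using h

lemma schwartz_sq_integrable (ψ : SchwartzMap ℝ ℝ) :
    Integrable (fun x => ψ x ^ 2) := by
  have h := (ψ.integrable (μ := volume)).bdd_mul
    ψ.continuous.aestronglyMeasurable
    (Filter.Eventually.of_forall fun x => by simpa using ψ.norm_iteratedFDeriv_le_seminorm ℝ 0 x)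
  simpa [sq] using h

/-- Combined Pohozaev-type identity for Schwartz solutions of the solitary-wave
equation `φ'''' + βφ'' + (1−c²)φ = |φ|^{p−1}φ`. -/
theorem combined_pohozaev_identity (p c β : ℝ) (hp : 1 < p) (φ : SchwartzMap ℝ ℝ)
    (hφ : ∀ x : ℝ, iteratedDeriv 4 (⇑φ) x + β * iteratedDeriv 2 (⇑φ) x
      + (1 - c ^ 2) * φ x = |φ x| ^ (p - 1) * φ x) :
    (3 * p + 5) * (∫ x : ℝ, (iteratedDeriv 2 (⇑φ) x) ^ 2)
      - (p + 3) * β * (∫ x : ℝ, (deriv (⇑φ) x) ^ 2)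
      - (p - 1) * (1 - c ^ 2) * (∫ x : ℝ, (φ x) ^ 2) = 0 := by
  set φ1 : SchwartzMap ℝ ℝ := SchwartzMap.derivCLM ℝ ℝ φ with hφ1
  set φ2 : SchwartzMap ℝ ℝ := SchwartzMap.derivCLM ℝ ℝ φ1 with hφ2
  set φ3 : SchwartzMap ℝ ℝ := SchwartzMap.derivCLM ℝ ℝ φ2 with hφ3
  set φ4 : SchwartzMap ℝ ℝ := SchwartzMap.derivCLM ℝ ℝ φ3 with hφ4
  have e1 : deriv (⇑φ) = ⇑φ1 := rfl
  have e2 : iteratedDeriv 2 (⇑φ) = ⇑φ2 := by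
    rw [iteratedDeriv_succ, iteratedDeriv_one]; rfl
  have e4 : iteratedDeriv 4 (⇑φ) = ⇑φ4 := by
    rw [iteratedDeriv_succ, iteratedDeriv_succ, e2]; rfl
  -- pointwise derivatives
  have h0 : ∀ x, HasDerivAt (⇑φ) (φ1 x) x := fun x => φ.differentiableAt.hasDerivAt
  have h1 : ∀ x, HasDerivAt (⇑φ1) (φ2 x) x := fun x => φ1.differentiableAt.hasDerivAt
  have h2 : ∀ x, HasDerivAt (⇑φ2) (φ3 x) x := fun x => φ2.differentiableAt.hasDerivAt
  have h3 : ∀ x, HasDerivAt (⇑φ3) (φ4 x) x := fun x => φ3.differentiableAt.hasDerivAt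
  -- the equation in terms of φ2, φ4
  have heq : ∀ x, φ4 x + β * φ2 x + (1 - c ^ 2) * φ x = |φ x| ^ (p - 1) * φ x := by
    intro x
    have := hφ x
    rwa [e2, e4] at this
  -- the primitive F
  set F : ℝ → ℝ := fun x =>
    -(2*(p+1)) * (x * (φ1 x * φ3 x)) + (2*p+4) * (φ1 x * φ2 x)
      + (p+1) * (x * (φ2 x * φ2 x)) - 2 * (φ x * φ3 x)
      - ((p+1)*β) * (x * (φ1 x * φ1 x)) - (2*β) * (φ x * φ1 x)
      - ((p+1)*(1-c^2)) * (x * (φ x * φ x)) + 2 * (x * |φ x| ^ (p+1)) with hF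
  set Q : ℝ → ℝ := fun x =>
    (3*p+5) * φ2 x ^ 2 - (p+3)*β * φ1 x ^ 2 - (p-1)*(1-c^2) * φ x ^ 2 with hQ
  have hder : ∀ x, HasDerivAt F (Q x) x := by
    intro x
    have hH : HasDerivAt (fun y => |φ y| ^ (p+1))
        ((p+1) * |φ x| ^ (p-1) * φ x * (φ1 x)) x :=
      (habs hp (φ x)).comp x (h0 x)
    have key := (((hasDerivAt_id' (𝕜 := ℝ) (x := x)).mul ((h1 x).mul (h3 x))).const_mul
          (-(2*(p+1)))).add
        (((h1 x).mul (h2 x)).const_mul (2*p+4)) |>.add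
        (((hasDerivAt_id' (𝕜 := ℝ) (x := x)).mul ((h2 x).mul (h2 x))).const_mul (p+1)) |>.sub
        (((h0 x).mul (h3 x)).const_mul 2) |>.sub
        (((hasDerivAt_id' (𝕜 := ℝ) (x := x)).mul ((h1 x).mul (h1 x))).const_mul ((p+1)*β)) |>.sub
        (((h0 x).mul (h1 x)).const_mul (2*β)) |>.sub
        (((hasDerivAt_id' (𝕜 := ℝ) (x := x)).mul ((h0 x).mul (h0 x))).const_mul
          ((p+1)*(1-c^2))) |>.add
        (((hasDerivAt_id' (𝕜 := ℝ) (x := x)).mul hH).const_mul 2)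
    refine key.congr_deriv (Eq.symm ?_)
    rw [habs_eq hp (φ x)]
    simp only [Pi.mul_apply]
    linear_combination (2*(p+1)*x*(φ1 x) + 2*(φ x)) * heq x
  -- integrability of Q
  have hQint : Integrable Q := by
    apply Integrable.sub
    apply Integrable.sub
    · exact (schwartz_sq_integrable φ2).const_mul _
    · exact (schwartz_sq_integrable φ1).const_mul _
    · exact (schwartz_sq_integrable φ).const_mul _
  -- limits of F
  have hFlim : ∀ l : Filter ℝ, l ≤ Filter.cocompact ℝ → Filter.Tendsto F l (nhds 0) := by
    intro l hl
    have t0 := schwartz_tendsto_zero φ l hl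
    have t1 := schwartz_tendsto_zero φ1 l hl
    have t2 := schwartz_tendsto_zero φ2 l hl
    have t3 := schwartz_tendsto_zero φ3 l hl
    have x0 := schwartz_x_tendsto_zero φ l hl
    have x1 := schwartz_x_tendsto_zero φ1 l hl
    have x2 := schwartz_x_tendsto_zero φ2 l hl
    -- the nonlinear term
    have tnl : Filter.Tendsto (fun x => |φ x| ^ (p-1) * φ x) l (nhds 0) := by
      have h2 : ContinuousAt (fun y : ℝ => y ^ (p-1)) 0 :=
        Real.continuousAt_rpow_const 0 (p-1) (Or.inr (by linarith))
      have h3 : Filter.Tendsto (fun s : ℝ => |s|) (nhds 0) (nhds 0) := by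
        simpa using (continuous_abs.tendsto (0:ℝ))
      have h4 := h2.tendsto.comp h3
      have h5 : Filter.Tendsto (fun s : ℝ => |s| ^ (p-1)) (nhds 0) (nhds (0:ℝ)) := by
        simpa [Real.zero_rpow (show p-1 ≠ 0 by linarith), Function.comp_def] using h4
      have h6 : Filter.Tendsto (fun s : ℝ => |s| ^ (p-1) * s) (nhds 0) (nhds (0:ℝ)) := by
        simpa using h5.mul tendsto_id
      have := h6.comp t0
      simpa [Function.comp_def] using this
    have hrw : F = fun x =>
      -(2*(p+1)) * ((x * φ1 x) * φ3 x) + (2*p+4) * (φ1 x * φ2 x)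
      + (p+1) * ((x * φ2 x) * φ2 x) - 2 * (φ x * φ3 x)
      - ((p+1)*β) * ((x * φ1 x) * φ1 x) - (2*β) * (φ x * φ1 x)
      - ((p+1)*(1-c^2)) * ((x * φ x) * φ x) + 2 * ((x * φ x) * (|φ x| ^ (p-1) * φ x)) := by
      funext x
      simp only [hF]
      rw [habs_eq hp (φ x)]
      ring
    rw [hrw]
    have z : (0:ℝ) = -(2*(p+1)) * (0*0) + (2*p+4) * (0*0) + (p+1) * (0*0) - 2*(0*0)
        - ((p+1)*β) * (0*0) - (2*β) * (0*0) - ((p+1)*(1-c^2)) * (0*0) + 2 * (0*0) := by ring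
    rw [z]
    exact ((((((((x1.mul t3).const_mul _).add ((t1.mul t2).const_mul _)).add
      ((x2.mul t2).const_mul _)).sub ((t0.mul t3).const_mul _)).sub
      ((x1.mul t1).const_mul _)).sub ((t0.mul t1).const_mul _)).sub
      ((x0.mul t0).const_mul _)).add ((x0.mul tnl).const_mul _)
  -- conclude
  have hint0 : (∫ x, Q x) = 0 := by
    have := integral_of_hasDerivAt_of_tendsto hder hQint
      (hFlim _ _root_.atBot_le_cocompact) (hFlim _ _root_.atTop_le_cocompact)
    simpa using this
  rw [e1, e2]
  calc (3 * p + 5) * (∫ x : ℝ, (φ2 x) ^ 2) - (p + 3) * β * (∫ x : ℝ, (φ1 x) ^ 2)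
      - (p - 1) * (1 - c ^ 2) * (∫ x : ℝ, (φ x) ^ 2)
      = ∫ x, Q x := by
        simp only [hQ]
        have I2 : Integrable (fun x => (3*p+5) * φ2 x ^ 2) :=
          (schwartz_sq_integrable φ2).const_mul _
        have I1 : Integrable (fun x => (p+3)*β * φ1 x ^ 2) :=
          (schwartz_sq_integrable φ1).const_mul _
        have I0 : Integrable (fun x => (p-1)*(1-c^2) * φ x ^ 2) :=
          (schwartz_sq_integrable φ).const_mul _
        have I21 : Integrable (fun x => (3*p+5) * φ2 x ^ 2 - (p+3)*β * φ1 x ^ 2) := I2.sub I1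
        rw [integral_sub I21 I0, integral_sub I2 I1,
          integral_const_mul, integral_const_mul, integral_const_mul]
    _ = 0 := hint0
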